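/- Let 0 < m < k, let J, N be positive integers, Δx > 0, Δt > 0, ξ > 0. Let Λ = diag(Λ⁺, −Λ⁻) be a constant diagonal matrix with Λ⁺ ∈ ℝ^{m×m} and Λ⁻ ∈ ℝ^{(k−m)×(k−m)} diagonal with strictly positive diagonal entries, let Π ∈ ℝ^{k×k} be constant, and let Pⱼ = diag(P⁺ⱼ, P⁻ⱼ), j = −1, …, J, be diagonal matrices whose diagonal entries all lie in [ζ, β] with 0 < ζ ≤ β. Let K, M ∈ ℝ^{k×k} with M diagonal, and let bⁿ ∈ ℝ^k, n = 0, …, N, with b⁰ = 0. Let Wⱼⁿ = (W⁺ⱼⁿ, W⁻ⱼⁿ) evolve by W̃⁺ⱼⁿ = W⁺ⱼⁿ − (Δt/Δx)·Λ⁺·(W⁺ⱼⁿ − W⁺_{j−1}ⁿ), W̃⁻ⱼⁿ = W⁻ⱼⁿ + (Δt/Δx)·Λ⁻·(W⁻_{j+1}ⁿ − W⁻ⱼⁿ), Wⱼ^{n+1} = W̃ⱼⁿ − Δt·Π·W̃ⱼⁿ for j = 0, …, J−1, with boundary conditions (W⁺₋₁ⁿ, W⁻_Jⁿ) = K·(W⁺_{J−1}ⁿ,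 W⁻₀ⁿ) + M·bⁿ. Assume: (CFL) (Δt/Δx)·(largest diagonal entry of diag(Λ⁺, Λ⁻)) ≤ 1; (i) there is η > 0 with 0 < 1 − η·Δt < 1 such that for all j = 0, …, J−1 and v ∈ ℝ^k, vᵀ·(1/Δx)·diag( −Λ⁺·(P⁺_{j+1} − P⁺ⱼ), Λ⁻·(P⁻ⱼ − P⁻_{j−1}) )·v ≥ η·vᵀPⱼv; (ii) PⱼΠ + ΠᵀPⱼ − Δt·ΠᵀPⱼΠ is positive semi-definite for all j = 0, …, J−1; (iii) diag(Λ⁺P⁺_J, Λ⁻P⁻₋₁) − (1 + ξ)·Kᵀ·diag(Λ⁺P⁺₀, Λ⁻P⁻_{J−1})·K is positive semi-definite; (iv) ν > 0 satisfies cᵀMᵀ·diag(Λ⁺P⁺₀, Λ⁻P⁻_{J−1})·Mc ≤ ν·|c|² for all c ∈ ℝ^k. Then for all n = 0, …, N−1, Δx·∑_{j=0}^{J−1} |Wⱼ^{n+1}|² ≤ (β/ζ)·e^{−η·(n+1)·Δt}·Δx·∑_{j=0}^{J−1} |Wⱼ⁰|² + (ν/(ζ·η))·(1 + 1/ξ)·max_{0≤s≤n}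 |bˢ|². -/

import Mathlib

open Matrix

/-- The block-diagonal matrix `diag(diagonal a, diagonal c)` built from the
diagonal entries `a` of the upper-left block and `c` of the lower-right block. -/
def blkdiag {m km : ℕ} (a : Fin m → ℝ) (c : Fin km → ℝ) :
    Matrix (Fin m ⊕ Fin km) (Fin m ⊕ Fin km) ℝ :=
  Matrix.fromBlocks (Matrix.diagonal a) 0 0 (Matrix.diagonal c)

lemma dot_blkdiag {m km : ℕ} (a : Fin m → ℝ) (c : Fin km → ℝ) (v : Fin m ⊕ Fin km → ℝ) :
    v ⬝ᵥ (blkdiag a c *ᵥ v) =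
      (∑ i, a i * v (Sum.inl i) ^ 2) + ∑ i, c i * v (Sum.inr i) ^ 2 := by
  simp only [blkdiag, dotProduct, Matrix.mulVec, Fintype.sum_sum_type, sq]
  simp [Matrix.fromBlocks, Matrix.diagonal, dotProduct, Fintype.sum_sum_type,
    Finset.mul_sum, mul_comm, mul_assoc, mul_left_comm]

lemma dot_conj {ι : Type*} [Fintype ι] (B C : Matrix ι ι ℝ) (u : ι → ℝ) :
    (B *ᵥ u) ⬝ᵥ (C *ᵥ (B *ᵥ u)) = u ⬝ᵥ ((Bᵀ * C * B) *ᵥ u) := by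
  have key : ∀ w : ι → ℝ, u ⬝ᵥ (Bᵀ *ᵥ w) = (B *ᵥ u) ⬝ᵥ w := by
    intro w
    rw [Matrix.dotProduct_mulVec, Matrix.vecMul_transpose]
  conv_rhs => rw [mul_assoc, ← Matrix.mulVec_mulVec, key, ← Matrix.mulVec_mulVec]

lemma quad_step {ι : Type*} [Fintype ι]
    (P A : Matrix ι ι ℝ) (t : ℝ) (v : ι → ℝ) :
    (v - t • (A *ᵥ v)) ⬝ᵥ (P *ᵥ (v - t • (A *ᵥ v))) =
      v ⬝ᵥ (P *ᵥ v) - t * (v ⬝ᵥ ((P * A + Aᵀ * P - t • (Aᵀ * P * A)) *ᵥ v)) := by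
  have key : ∀ w : ι → ℝ, v ⬝ᵥ (Aᵀ *ᵥ w) = (A *ᵥ v) ⬝ᵥ w := by
    intro w
    rw [Matrix.dotProduct_mulVec, Matrix.vecMul_transpose]
  have h1 : v ⬝ᵥ ((P * A) *ᵥ v) = v ⬝ᵥ (P *ᵥ (A *ᵥ v)) := by
    rw [Matrix.mulVec_mulVec]
  have h2 : v ⬝ᵥ ((Aᵀ * P) *ᵥ v) = (A *ᵥ v) ⬝ᵥ (P *ᵥ v) := by
    rw [← Matrix.mulVec_mulVec, key]
  have h3 : v ⬝ᵥ ((Aᵀ * P * A) *ᵥ v) = (A *ᵥ v) ⬝ᵥ (P *ᵥ (A *ᵥ v)) := by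
    rw [mul_assoc, ← Matrix.mulVec_mulVec, key, Matrix.mulVec_mulVec]
  simp only [Matrix.add_mulVec, Matrix.sub_mulVec, Matrix.smul_mulVec,
    Matrix.mulVec_sub, Matrix.mulVec_smul, dotProduct_sub, sub_dotProduct,
    dotProduct_add, add_dotProduct, dotProduct_smul,
    smul_dotProduct, smul_eq_mul]
  simp only [h1, h2, h3]
  ring

lemma sum_Icc_top (c : ℤ) (h : 0 ≤ c + 1) (f : ℤ → ℝ) :
    ∑ j ∈ Finset.Icc (0:ℤ) (c+1), f j = ∑ j ∈ Finset.Icc (0:ℤ) c, f j + f (c+1) := by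
  have : Finset.Icc (0:ℤ) (c+1) = insert (c+1) (Finset.Icc 0 c) := by
    ext x; simp [Finset.mem_Icc]; omega
  rw [this, Finset.sum_insert (by simp [Finset.mem_Icc])]
  ring

lemma abel1 (J : ℕ) (f g : ℤ → ℝ) :
    ∑ j ∈ Finset.Icc (0:ℤ) ((J:ℤ)-1), f j * (g j - g (j-1)) =
      ∑ j ∈ Finset.Icc (0:ℤ) ((J:ℤ)-1), (f j - f (j+1)) * g j
        + f (J:ℤ) * g ((J:ℤ)-1) - f 0 * g (-1) := by
  induction J with
  | zero => simp
  | succ n ih =>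
    have h : (0:ℤ) ≤ ((n:ℤ)-1) + 1 := by omega
    push_cast
    rw [show ((n:ℤ)+1-1) = ((n:ℤ)-1)+1 by ring]
    rw [sum_Icc_top _ h, sum_Icc_top _ h]
    rw [show ((n:ℤ)-1+1) = (n:ℤ) by ring]
    rw [ih]
    ring

lemma abel2 (J : ℕ) (f g : ℤ → ℝ) :
    ∑ j ∈ Finset.Icc (0:ℤ) ((J:ℤ)-1), f j * (g j - g (j+1)) =
      ∑ j ∈ Finset.Icc (0:ℤ) ((J:ℤ)-1), (f j - f (j-1)) * g j
        + f (-1) * g 0 - f ((J:ℤ)-1) * g (J:ℤ) := by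
  induction J with
  | zero => simp
  | succ n ih =>
    have h : (0:ℤ) ≤ ((n:ℤ)-1) + 1 := by omega
    push_cast
    rw [show ((n:ℤ)+1-1) = ((n:ℤ)-1)+1 by ring]
    rw [sum_Icc_top _ h, sum_Icc_top _ h]
    rw [show ((n:ℤ)-1+1) = (n:ℤ) by ring]
    rw [ih]
    ring

lemma young (ξ c x y : ℝ) (hξ : 0 < ξ) (hc : 0 ≤ c) :
    c * (x + y) ^ 2 ≤ (1 + ξ) * (c * x ^ 2) + (1 + 1 / ξ) * (c * y ^ 2) := by
  have hξ' : ξ * (1 / ξ) = 1 := by field_simp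
  have key : (x + y) ^ 2 ≤ (1 + ξ) * x ^ 2 + (1 + 1 / ξ) * y ^ 2 := by
    nlinarith [sq_nonneg (ξ * x - y), hξ', mul_pos hξ hξ, sq_nonneg x, sq_nonneg y,
      mul_nonneg (le_of_lt hξ) (sq_nonneg x)]
  nlinarith [mul_le_mul_of_nonneg_left key hc]

lemma convex_bound (lam p x y : ℝ) (h0 : 0 ≤ lam) (h1 : lam ≤ 1) (hp : 0 ≤ p) :
    p * (x - lam * (x - y)) ^ 2 ≤ p * (x ^ 2 - lam * (x ^ 2 - y ^ 2)) := by
  nlinarith [mul_nonneg hp (mul_nonneg (mul_nonneg h0 (sub_nonneg.2 h1)) (sq_nonneg (x - y)))]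

lemma convex_bound' (lam p x z : ℝ) (h0 : 0 ≤ lam) (h1 : lam ≤ 1) (hp : 0 ≤ p) :
    p * (x + lam * (z - x)) ^ 2 ≤ p * (x ^ 2 - lam * (x ^ 2 - z ^ 2)) := by
  nlinarith [mul_nonneg hp (mul_nonneg (mul_nonneg h0 (sub_nonneg.2 h1)) (sq_nonneg (x - z)))]

lemma step_lemma (m km J N : ℕ)
    (Δx Δt ξ η ν ζ : ℝ) (hΔx : 0 < Δx) (hΔt : 0 < Δt) (hξ : 0 < ξ) (hζ : 0 < ζ)
    (Λp : Fin m → ℝ) (Λm : Fin km → ℝ)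
    (Pp : ℤ → Fin m → ℝ) (Pm : ℤ → Fin km → ℝ)
    (Pim : Matrix (Fin m ⊕ Fin km) (Fin m ⊕ Fin km) ℝ)
    (K M : Matrix (Fin m ⊕ Fin km) (Fin m ⊕ Fin km) ℝ)
    (b : ℕ → Fin m ⊕ Fin km → ℝ)
    (hΛppos : ∀ i, 0 < Λp i) (hΛmpos : ∀ i, 0 < Λm i)
    (hPpbound : ∀ j : ℤ, -1 ≤ j → j ≤ (J : ℤ) → ∀ i, ζ ≤ Pp j i)
    (hPmbound : ∀ j : ℤ, -1 ≤ j → j ≤ (J : ℤ) → ∀ i, ζ ≤ Pm j i)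
    (W Wtil : ℕ → ℤ → Fin m ⊕ Fin km → ℝ)
    (hplus : ∀ n : ℕ, n < N → ∀ j : ℤ, 0 ≤ j → j < (J : ℤ) → ∀ i : Fin m,
      Wtil n j (Sum.inl i) = W n j (Sum.inl i)
        - (Δt / Δx) * Λp i * (W n j (Sum.inl i) - W n (j - 1) (Sum.inl i)))
    (hminus : ∀ n : ℕ, n < N → ∀ j : ℤ, 0 ≤ j → j < (J : ℤ) → ∀ i : Fin km,
      Wtil n j (Sum.inr i) = W n j (Sum.inr i)
        + (Δt / Δx) * Λm i * (W n (j + 1) (Sum.inr i) - W n j (Sum.inr i)))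
    (hstep : ∀ n : ℕ, n < N → ∀ j : ℤ, 0 ≤ j → j < (J : ℤ) →
      W (n + 1) j = Wtil n j - Δt • (Pim *ᵥ Wtil n j))
    (hBC : ∀ n : ℕ, n ≤ N →
      Sum.elim (fun i => W n (-1) (Sum.inl i)) (fun i => W n (J : ℤ) (Sum.inr i)) =
        K *ᵥ Sum.elim (fun i => W n ((J : ℤ) - 1) (Sum.inl i))
            (fun i => W n 0 (Sum.inr i)) + M *ᵥ b n)
    (hCFL : (∀ i, (Δt / Δx) * Λp i ≤ 1) ∧ (∀ i, (Δt / Δx) * Λm i ≤ 1))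
    (hdiss : ∀ j : ℤ, 0 ≤ j → j < (J : ℤ) → ∀ v : Fin m ⊕ Fin km → ℝ,
      η * (v ⬝ᵥ (blkdiag (Pp j) (Pm j) *ᵥ v)) ≤
        v ⬝ᵥ (((1 / Δx) • blkdiag
          (fun i => -Λp i * (Pp (j + 1) i - Pp j i))
          (fun i => Λm i * (Pm j i - Pm (j - 1) i))) *ᵥ v))
    (hsrc : ∀ j : ℤ, 0 ≤ j → j < (J : ℤ) → ∀ v : Fin m ⊕ Fin km → ℝ,
      0 ≤ v ⬝ᵥ ((blkdiag (Pp j) (Pm j) * Pim + Pimᵀ * blkdiag (Pp j) (Pm j)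
          - Δt • (Pimᵀ * blkdiag (Pp j) (Pm j) * Pim)) *ᵥ v))
    (hbdry : ∀ v : Fin m ⊕ Fin km → ℝ,
      0 ≤ v ⬝ᵥ ((blkdiag (fun i => Λp i * Pp (J : ℤ) i)
            (fun i => Λm i * Pm (-1) i)
          - (1 + ξ) • (Kᵀ * blkdiag (fun i => Λp i * Pp 0 i)
              (fun i => Λm i * Pm ((J : ℤ) - 1) i) * K)) *ᵥ v))
    (hnu : ∀ c : Fin m ⊕ Fin km → ℝ,
      c ⬝ᵥ ((Mᵀ * blkdiag (fun i => Λp i * Pp 0 i)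
          (fun i => Λm i * Pm ((J : ℤ) - 1) i) * M) *ᵥ c) ≤
        ν * ∑ i, (c i) ^ 2)
    (n : ℕ) (hnN : n < N) :
    ∑ j ∈ Finset.Icc (0:ℤ) ((J:ℤ)-1),
        ((∑ i, Pp j i * (W (n+1) j (Sum.inl i))^2) + ∑ i, Pm j i * (W (n+1) j (Sum.inr i))^2)
      ≤ (1 - η * Δt) * ∑ j ∈ Finset.Icc (0:ℤ) ((J:ℤ)-1),
            ((∑ i, Pp j i * (W n j (Sum.inl i))^2) + ∑ i, Pm j i * (W n j (Sum.inr i))^2)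
        + (Δt / Δx) * (ν * (1 + 1/ξ) * ∑ i, (b n i)^2) := by
  have hmemS : ∀ j ∈ Finset.Icc (0:ℤ) ((J:ℤ)-1), 0 ≤ j ∧ j < (J:ℤ) := by
    intro j hj; rw [Finset.mem_Icc] at hj; omega
  have hPp0 : ∀ j : ℤ, -1 ≤ j → j ≤ (J:ℤ) → ∀ i, 0 ≤ Pp j i :=
    fun j h1 h2 i => le_trans hζ.le (hPpbound j h1 h2 i)
  have hPm0 : ∀ j : ℤ, -1 ≤ j → j ≤ (J:ℤ) → ∀ i, 0 ≤ Pm j i :=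
    fun j h1 h2 i => le_trans hζ.le (hPmbound j h1 h2 i)
  -- Part A : source step
  have srcA : ∀ j ∈ Finset.Icc (0:ℤ) ((J:ℤ)-1),
      (∑ i, Pp j i * (W (n+1) j (Sum.inl i))^2) + ∑ i, Pm j i * (W (n+1) j (Sum.inr i))^2
        ≤ (∑ i, Pp j i * (Wtil n j (Sum.inl i))^2) + ∑ i, Pm j i * (Wtil n j (Sum.inr i))^2 := by
    intro j hj
    obtain ⟨hj0, hjJ⟩ := hmemS j hj
    rw [← dot_blkdiag, ← dot_blkdiag, hstep n hnN j hj0 hjJ, quad_step]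
    have h := hsrc j hj0 hjJ (Wtil n j)
    nlinarith [mul_nonneg hΔt.le h]
  -- Part B : transport, plus components
  have plus_est : ∀ i : Fin m,
      ∑ j ∈ Finset.Icc (0:ℤ) ((J:ℤ)-1), Pp j i * (Wtil n j (Sum.inl i))^2
        ≤ ∑ j ∈ Finset.Icc (0:ℤ) ((J:ℤ)-1), (Pp j i * (W n j (Sum.inl i))^2
              - Δt * ((1/Δx) * (-Λp i * (Pp (j+1) i - Pp j i)) * (W n j (Sum.inl i))^2))
          + (Δt/Δx) * ((Λp i * Pp 0 i) * (W n (-1) (Sum.inl i))^2)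
          - (Δt/Δx) * ((Λp i * Pp (J:ℤ) i) * (W n ((J:ℤ)-1) (Sum.inl i))^2) := by
    intro i
    have lam0 : 0 ≤ Δt/Δx * Λp i :=
      le_of_lt (mul_pos (div_pos hΔt hΔx) (hΛppos i))
    calc ∑ j ∈ Finset.Icc (0:ℤ) ((J:ℤ)-1), Pp j i * (Wtil n j (Sum.inl i))^2
        ≤ ∑ j ∈ Finset.Icc (0:ℤ) ((J:ℤ)-1), Pp j i * ((W n j (Sum.inl i))^2
            - (Δt/Δx * Λp i) * ((W n j (Sum.inl i))^2 - (W n (j-1) (Sum.inl i))^2)) := by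
          apply Finset.sum_le_sum
          intro j hj
          obtain ⟨hj0, hjJ⟩ := hmemS j hj
          rw [hplus n hnN j hj0 hjJ i]
          exact convex_bound _ _ _ _ lam0 (hCFL.1 i) (hPp0 j (by omega) (by omega) i)
      _ = ∑ j ∈ Finset.Icc (0:ℤ) ((J:ℤ)-1), Pp j i * (W n j (Sum.inl i))^2
            - (Δt/Δx * Λp i) * ∑ j ∈ Finset.Icc (0:ℤ) ((J:ℤ)-1),
                Pp j i * ((W n j (Sum.inl i))^2 - (W n (j-1) (Sum.inl i))^2) := by
          rw [Finset.mul_sum, ← Finset.sum_sub_distrib]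
          exact Finset.sum_congr rfl fun j _ => by ring
      _ = ∑ j ∈ Finset.Icc (0:ℤ) ((J:ℤ)-1), Pp j i * (W n j (Sum.inl i))^2
            - (Δt/Δx * Λp i) * (∑ j ∈ Finset.Icc (0:ℤ) ((J:ℤ)-1),
                (Pp j i - Pp (j+1) i) * (W n j (Sum.inl i))^2
              + Pp (J:ℤ) i * (W n ((J:ℤ)-1) (Sum.inl i))^2
              - Pp 0 i * (W n (-1) (Sum.inl i))^2) := by
          rw [abel1 J (fun j => Pp j i) (fun j => (W n j (Sum.inl i))^2)]
      _ = (∑ j ∈ Finset.Icc (0:ℤ) ((J:ℤ)-1), Pp j i * (W n j (Sum.inl i))^2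
            - (Δt/Δx * Λp i) * ∑ j ∈ Finset.Icc (0:ℤ) ((J:ℤ)-1),
                (Pp j i - Pp (j+1) i) * (W n j (Sum.inl i))^2)
          + (Δt/Δx) * ((Λp i * Pp 0 i) * (W n (-1) (Sum.inl i))^2)
          - (Δt/Δx) * ((Λp i * Pp (J:ℤ) i) * (W n ((J:ℤ)-1) (Sum.inl i))^2) := by
          ring
      _ = ∑ j ∈ Finset.Icc (0:ℤ) ((J:ℤ)-1), (Pp j i * (W n j (Sum.inl i))^2
              - Δt * ((1/Δx) * (-Λp i * (Pp (j+1) i - Pp j i)) * (W n j (Sum.inl i))^2))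
          + (Δt/Δx) * ((Λp i * Pp 0 i) * (W n (-1) (Sum.inl i))^2)
          - (Δt/Δx) * ((Λp i * Pp (J:ℤ) i) * (W n ((J:ℤ)-1) (Sum.inl i))^2) := by
          congr 1
          congr 1
          rw [Finset.mul_sum, ← Finset.sum_sub_distrib]
          exact Finset.sum_congr rfl fun j _ => by ring
  -- Part B' : transport, minus components
  have minus_est : ∀ i : Fin km,
      ∑ j ∈ Finset.Icc (0:ℤ) ((J:ℤ)-1), Pm j i * (Wtil n j (Sum.inr i))^2
        ≤ ∑ j ∈ Finset.Icc (0:ℤ) ((J:ℤ)-1), (Pm j i * (W n j (Sum.inr i))^2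
              - Δt * ((1/Δx) * (Λm i * (Pm j i - Pm (j-1) i)) * (W n j (Sum.inr i))^2))
          + (Δt/Δx) * ((Λm i * Pm ((J:ℤ)-1) i) * (W n (J:ℤ) (Sum.inr i))^2)
          - (Δt/Δx) * ((Λm i * Pm (-1) i) * (W n 0 (Sum.inr i))^2) := by
    intro i
    have lam0 : 0 ≤ Δt/Δx * Λm i :=
      le_of_lt (mul_pos (div_pos hΔt hΔx) (hΛmpos i))
    calc ∑ j ∈ Finset.Icc (0:ℤ) ((J:ℤ)-1), Pm j i * (Wtil n j (Sum.inr i))^2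
        ≤ ∑ j ∈ Finset.Icc (0:ℤ) ((J:ℤ)-1), Pm j i * ((W n j (Sum.inr i))^2
            - (Δt/Δx * Λm i) * ((W n j (Sum.inr i))^2 - (W n (j+1) (Sum.inr i))^2)) := by
          apply Finset.sum_le_sum
          intro j hj
          obtain ⟨hj0, hjJ⟩ := hmemS j hj
          rw [hminus n hnN j hj0 hjJ i]
          exact convex_bound' _ _ _ _ lam0 (hCFL.2 i) (hPm0 j (by omega) (by omega) i)
      _ = ∑ j ∈ Finset.Icc (0:ℤ) ((J:ℤ)-1), Pm j i * (W n j (Sum.inr i))^2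
            - (Δt/Δx * Λm i) * ∑ j ∈ Finset.Icc (0:ℤ) ((J:ℤ)-1),
                Pm j i * ((W n j (Sum.inr i))^2 - (W n (j+1) (Sum.inr i))^2) := by
          rw [Finset.mul_sum, ← Finset.sum_sub_distrib]
          exact Finset.sum_congr rfl fun j _ => by ring
      _ = ∑ j ∈ Finset.Icc (0:ℤ) ((J:ℤ)-1), Pm j i * (W n j (Sum.inr i))^2
            - (Δt/Δx * Λm i) * (∑ j ∈ Finset.Icc (0:ℤ) ((J:ℤ)-1),
                (Pm j i - Pm (j-1) i) * (W n j (Sum.inr i))^2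
              + Pm (-1) i * (W n 0 (Sum.inr i))^2
              - Pm ((J:ℤ)-1) i * (W n (J:ℤ) (Sum.inr i))^2) := by
          rw [abel2 J (fun j => Pm j i) (fun j => (W n j (Sum.inr i))^2)]
      _ = (∑ j ∈ Finset.Icc (0:ℤ) ((J:ℤ)-1), Pm j i * (W n j (Sum.inr i))^2
            - (Δt/Δx * Λm i) * ∑ j ∈ Finset.Icc (0:ℤ) ((J:ℤ)-1),
                (Pm j i - Pm (j-1) i) * (W n j (Sum.inr i))^2)
          + (Δt/Δx) * ((Λm i * Pm ((J:ℤ)-1) i) * (W n (J:ℤ) (Sum.inr i))^2)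
          - (Δt/Δx) * ((Λm i * Pm (-1) i) * (W n 0 (Sum.inr i))^2) := by
          ring
      _ = ∑ j ∈ Finset.Icc (0:ℤ) ((J:ℤ)-1), (Pm j i * (W n j (Sum.inr i))^2
              - Δt * ((1/Δx) * (Λm i * (Pm j i - Pm (j-1) i)) * (W n j (Sum.inr i))^2))
          + (Δt/Δx) * ((Λm i * Pm ((J:ℤ)-1) i) * (W n (J:ℤ) (Sum.inr i))^2)
          - (Δt/Δx) * ((Λm i * Pm (-1) i) * (W n 0 (Sum.inr i))^2) := by
          congr 1
          congr 1
          rw [Finset.mul_sum, ← Finset.sum_sub_distrib]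
          exact Finset.sum_congr rfl fun j _ => by ring
  -- Part D : interior dissipation per cell
  have diss_j : ∀ j ∈ Finset.Icc (0:ℤ) ((J:ℤ)-1),
      (∑ i, (Pp j i * (W n j (Sum.inl i))^2
          - Δt * ((1/Δx) * (-Λp i * (Pp (j+1) i - Pp j i)) * (W n j (Sum.inl i))^2)))
        + (∑ i, (Pm j i * (W n j (Sum.inr i))^2
          - Δt * ((1/Δx) * (Λm i * (Pm j i - Pm (j-1) i)) * (W n j (Sum.inr i))^2)))
      ≤ (1 - η * Δt) * ((∑ i, Pp j i * (W n j (Sum.inl i))^2)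
          + ∑ i, Pm j i * (W n j (Sum.inr i))^2) := by
    intro j hj
    obtain ⟨hj0, hjJ⟩ := hmemS j hj
    have h := hdiss j hj0 hjJ (W n j)
    simp only [dot_blkdiag, Matrix.smul_mulVec, dotProduct_smul,
      smul_eq_mul] at h
    have e1 : ∑ i, (Pp j i * (W n j (Sum.inl i))^2
          - Δt * ((1/Δx) * (-Λp i * (Pp (j+1) i - Pp j i)) * (W n j (Sum.inl i))^2))
        = ∑ i, Pp j i * (W n j (Sum.inl i))^2
          - Δt * ((1/Δx) * ∑ i, (-Λp i * (Pp (j+1) i - Pp j i)) * (W n j (Sum.inl i))^2) := by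
      rw [Finset.sum_sub_distrib]
      congr 1
      rw [Finset.mul_sum, Finset.mul_sum]
      exact Finset.sum_congr rfl fun i _ => by ring
    have e2 : ∑ i, (Pm j i * (W n j (Sum.inr i))^2
          - Δt * ((1/Δx) * (Λm i * (Pm j i - Pm (j-1) i)) * (W n j (Sum.inr i))^2))
        = ∑ i, Pm j i * (W n j (Sum.inr i))^2
          - Δt * ((1/Δx) * ∑ i, (Λm i * (Pm j i - Pm (j-1) i)) * (W n j (Sum.inr i))^2) := by
      rw [Finset.sum_sub_distrib]
      congr 1
      rw [Finset.mul_sum, Finset.mul_sum]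
      exact Finset.sum_congr rfl fun i _ => by ring
    rw [e1, e2]
    nlinarith [mul_le_mul_of_nonneg_left h hΔt.le]
  -- Part C : assemble the interior estimate
  have interior :
      ∑ j ∈ Finset.Icc (0:ℤ) ((J:ℤ)-1),
          ((∑ i, Pp j i * (Wtil n j (Sum.inl i))^2) + ∑ i, Pm j i * (Wtil n j (Sum.inr i))^2)
        ≤ (1 - η * Δt) * ∑ j ∈ Finset.Icc (0:ℤ) ((J:ℤ)-1),
              ((∑ i, Pp j i * (W n j (Sum.inl i))^2) + ∑ i, Pm j i * (W n j (Sum.inr i))^2)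
          + ((Δt/Δx) * ∑ i, (Λp i * Pp 0 i) * (W n (-1) (Sum.inl i))^2
            - (Δt/Δx) * ∑ i, (Λp i * Pp (J:ℤ) i) * (W n ((J:ℤ)-1) (Sum.inl i))^2
            + (Δt/Δx) * ∑ i, (Λm i * Pm ((J:ℤ)-1) i) * (W n (J:ℤ) (Sum.inr i))^2
            - (Δt/Δx) * ∑ i, (Λm i * Pm (-1) i) * (W n 0 (Sum.inr i))^2) := by
    calc ∑ j ∈ Finset.Icc (0:ℤ) ((J:ℤ)-1),
          ((∑ i, Pp j i * (Wtil n j (Sum.inl i))^2) + ∑ i, Pm j i * (Wtil n j (Sum.inr i))^2)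
        = (∑ i : Fin m, ∑ j ∈ Finset.Icc (0:ℤ) ((J:ℤ)-1), Pp j i * (Wtil n j (Sum.inl i))^2)
          + ∑ i : Fin km, ∑ j ∈ Finset.Icc (0:ℤ) ((J:ℤ)-1), Pm j i * (Wtil n j (Sum.inr i))^2 := by
          rw [Finset.sum_add_distrib]
          congr 1 <;> exact Finset.sum_comm
      _ ≤ (∑ i : Fin m, (∑ j ∈ Finset.Icc (0:ℤ) ((J:ℤ)-1), (Pp j i * (W n j (Sum.inl i))^2
              - Δt * ((1/Δx) * (-Λp i * (Pp (j+1) i - Pp j i)) * (W n j (Sum.inl i))^2))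
            + (Δt/Δx) * ((Λp i * Pp 0 i) * (W n (-1) (Sum.inl i))^2)
            - (Δt/Δx) * ((Λp i * Pp (J:ℤ) i) * (W n ((J:ℤ)-1) (Sum.inl i))^2)))
          + ∑ i : Fin km, (∑ j ∈ Finset.Icc (0:ℤ) ((J:ℤ)-1), (Pm j i * (W n j (Sum.inr i))^2
              - Δt * ((1/Δx) * (Λm i * (Pm j i - Pm (j-1) i)) * (W n j (Sum.inr i))^2))
            + (Δt/Δx) * ((Λm i * Pm ((J:ℤ)-1) i) * (W n (J:ℤ) (Sum.inr i))^2)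
            - (Δt/Δx) * ((Λm i * Pm (-1) i) * (W n 0 (Sum.inr i))^2)) :=
          add_le_add (Finset.sum_le_sum fun i _ => plus_est i)
            (Finset.sum_le_sum fun i _ => minus_est i)
      _ = ∑ j ∈ Finset.Icc (0:ℤ) ((J:ℤ)-1),
            ((∑ i, (Pp j i * (W n j (Sum.inl i))^2
              - Δt * ((1/Δx) * (-Λp i * (Pp (j+1) i - Pp j i)) * (W n j (Sum.inl i))^2)))
            + (∑ i, (Pm j i * (W n j (Sum.inr i))^2
              - Δt * ((1/Δx) * (Λm i * (Pm j i - Pm (j-1) i)) * (W n j (Sum.inr i))^2))))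
          + ((Δt/Δx) * ∑ i, (Λp i * Pp 0 i) * (W n (-1) (Sum.inl i))^2
            - (Δt/Δx) * ∑ i, (Λp i * Pp (J:ℤ) i) * (W n ((J:ℤ)-1) (Sum.inl i))^2
            + (Δt/Δx) * ∑ i, (Λm i * Pm ((J:ℤ)-1) i) * (W n (J:ℤ) (Sum.inr i))^2
            - (Δt/Δx) * ∑ i, (Λm i * Pm (-1) i) * (W n 0 (Sum.inr i))^2) := by
          simp only [Finset.sum_add_distrib, Finset.sum_sub_distrib, ← Finset.mul_sum]
          have c1 : (∑ i : Fin m, ∑ j ∈ Finset.Icc (0:ℤ) ((J:ℤ)-1),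
              Pp j i * (W n j (Sum.inl i))^2)
              = ∑ j ∈ Finset.Icc (0:ℤ) ((J:ℤ)-1), ∑ i : Fin m,
                Pp j i * (W n j (Sum.inl i))^2 := Finset.sum_comm
          have c2 : (∑ i : Fin m, ∑ j ∈ Finset.Icc (0:ℤ) ((J:ℤ)-1),
              1/Δx * (-Λp i * (Pp (j+1) i - Pp j i)) * (W n j (Sum.inl i))^2)
              = ∑ j ∈ Finset.Icc (0:ℤ) ((J:ℤ)-1), ∑ i : Fin m,
                1/Δx * (-Λp i * (Pp (j+1) i - Pp j i)) * (W n j (Sum.inl i))^2 :=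
            Finset.sum_comm
          have c3 : (∑ i : Fin km, ∑ j ∈ Finset.Icc (0:ℤ) ((J:ℤ)-1),
              Pm j i * (W n j (Sum.inr i))^2)
              = ∑ j ∈ Finset.Icc (0:ℤ) ((J:ℤ)-1), ∑ i : Fin km,
                Pm j i * (W n j (Sum.inr i))^2 := Finset.sum_comm
          have c4 : (∑ i : Fin km, ∑ j ∈ Finset.Icc (0:ℤ) ((J:ℤ)-1),
              1/Δx * (Λm i * (Pm j i - Pm (j-1) i)) * (W n j (Sum.inr i))^2)
              = ∑ j ∈ Finset.Icc (0:ℤ) ((J:ℤ)-1), ∑ i : Fin km,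
                1/Δx * (Λm i * (Pm j i - Pm (j-1) i)) * (W n j (Sum.inr i))^2 :=
            Finset.sum_comm
          rw [c1, c2, c3, c4]
          ring
      _ ≤ ∑ j ∈ Finset.Icc (0:ℤ) ((J:ℤ)-1),
            ((1 - η * Δt) * ((∑ i, Pp j i * (W n j (Sum.inl i))^2)
              + ∑ i, Pm j i * (W n j (Sum.inr i))^2))
          + ((Δt/Δx) * ∑ i, (Λp i * Pp 0 i) * (W n (-1) (Sum.inl i))^2
            - (Δt/Δx) * ∑ i, (Λp i * Pp (J:ℤ) i) * (W n ((J:ℤ)-1) (Sum.inl i))^2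
            + (Δt/Δx) * ∑ i, (Λm i * Pm ((J:ℤ)-1) i) * (W n (J:ℤ) (Sum.inr i))^2
            - (Δt/Δx) * ∑ i, (Λm i * Pm (-1) i) * (W n 0 (Sum.inr i))^2) := by
          apply add_le_add_left
          exact Finset.sum_le_sum diss_j
      _ = (1 - η * Δt) * ∑ j ∈ Finset.Icc (0:ℤ) ((J:ℤ)-1),
              ((∑ i, Pp j i * (W n j (Sum.inl i))^2) + ∑ i, Pm j i * (W n j (Sum.inr i))^2)
          + ((Δt/Δx) * ∑ i, (Λp i * Pp 0 i) * (W n (-1) (Sum.inl i))^2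
            - (Δt/Δx) * ∑ i, (Λp i * Pp (J:ℤ) i) * (W n ((J:ℤ)-1) (Sum.inl i))^2
            + (Δt/Δx) * ∑ i, (Λm i * Pm ((J:ℤ)-1) i) * (W n (J:ℤ) (Sum.inr i))^2
            - (Δt/Δx) * ∑ i, (Λm i * Pm (-1) i) * (W n 0 (Sum.inr i))^2) := by
          rw [← Finset.mul_sum]
  -- Part E : boundary estimate
  have hbc := hBC n (le_of_lt hnN)
  have bdry_est :
      (∑ i, (Λp i * Pp 0 i) * (W n (-1) (Sum.inl i))^2)
        + ∑ i, (Λm i * Pm ((J:ℤ)-1) i) * (W n (J:ℤ) (Sum.inr i))^2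
      ≤ ((∑ i, (Λp i * Pp (J:ℤ) i) * (W n ((J:ℤ)-1) (Sum.inl i))^2)
          + ∑ i, (Λm i * Pm (-1) i) * (W n 0 (Sum.inr i))^2)
        + ν * (1 + 1/ξ) * ∑ i, (b n i)^2 := by
    calc (∑ i, (Λp i * Pp 0 i) * (W n (-1) (Sum.inl i))^2)
          + ∑ i, (Λm i * Pm ((J:ℤ)-1) i) * (W n (J:ℤ) (Sum.inr i))^2
        = (Sum.elim (fun i => W n (-1) (Sum.inl i)) (fun i => W n (J:ℤ) (Sum.inr i))) ⬝ᵥ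
            ((blkdiag (fun i => Λp i * Pp 0 i) (fun i => Λm i * Pm ((J:ℤ)-1) i)) *ᵥ
              (Sum.elim (fun i => W n (-1) (Sum.inl i)) (fun i => W n (J:ℤ) (Sum.inr i)))) := by
          rw [dot_blkdiag]; simp
      _ = (K *ᵥ Sum.elim (fun i => W n ((J:ℤ)-1) (Sum.inl i)) (fun i => W n 0 (Sum.inr i))
            + M *ᵥ b n) ⬝ᵥ
            ((blkdiag (fun i => Λp i * Pp 0 i) (fun i => Λm i * Pm ((J:ℤ)-1) i)) *ᵥ
              (K *ᵥ Sum.elim (fun i => W n ((J:ℤ)-1) (Sum.inl i)) (fun i => W n 0 (Sum.inr i))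
                + M *ᵥ b n)) := by rw [hbc]
      _ ≤ (1+ξ) * ((K *ᵥ Sum.elim (fun i => W n ((J:ℤ)-1) (Sum.inl i)) (fun i => W n 0 (Sum.inr i))) ⬝ᵥ
              ((blkdiag (fun i => Λp i * Pp 0 i) (fun i => Λm i * Pm ((J:ℤ)-1) i)) *ᵥ
                (K *ᵥ Sum.elim (fun i => W n ((J:ℤ)-1) (Sum.inl i)) (fun i => W n 0 (Sum.inr i)))))
          + (1+1/ξ) * ((M *ᵥ b n) ⬝ᵥ
              ((blkdiag (fun i => Λp i * Pp 0 i) (fun i => Λm i * Pm ((J:ℤ)-1) i)) *ᵥ (M *ᵥ b n))) := by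
          rw [dot_blkdiag, dot_blkdiag, dot_blkdiag]
          simp only [Pi.add_apply]
          have e1 : ∑ i : Fin m, (Λp i * Pp 0 i) *
                (((K *ᵥ Sum.elim (fun i => W n ((J:ℤ)-1) (Sum.inl i)) (fun i => W n 0 (Sum.inr i))) (Sum.inl i))
                  + ((M *ᵥ b n) (Sum.inl i)))^2
              ≤ (1+ξ) * (∑ i : Fin m, (Λp i * Pp 0 i) *
                  ((K *ᵥ Sum.elim (fun i => W n ((J:ℤ)-1) (Sum.inl i)) (fun i => W n 0 (Sum.inr i))) (Sum.inl i))^2)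
                + (1+1/ξ) * (∑ i : Fin m, (Λp i * Pp 0 i) * ((M *ᵥ b n) (Sum.inl i))^2) := by
            rw [Finset.mul_sum, Finset.mul_sum, ← Finset.sum_add_distrib]
            exact Finset.sum_le_sum fun i _ => young ξ _ _ _ hξ
              (mul_nonneg (hΛppos i).le (hPp0 0 (by omega) (by omega) i))
          have e2 : ∑ i : Fin km, (Λm i * Pm ((J:ℤ)-1) i) *
                (((K *ᵥ Sum.elim (fun i => W n ((J:ℤ)-1) (Sum.inl i)) (fun i => W n 0 (Sum.inr i))) (Sum.inr i))
                  + ((M *ᵥ b n) (Sum.inr i)))^2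
              ≤ (1+ξ) * (∑ i : Fin km, (Λm i * Pm ((J:ℤ)-1) i) *
                  ((K *ᵥ Sum.elim (fun i => W n ((J:ℤ)-1) (Sum.inl i)) (fun i => W n 0 (Sum.inr i))) (Sum.inr i))^2)
                + (1+1/ξ) * (∑ i : Fin km, (Λm i * Pm ((J:ℤ)-1) i) * ((M *ᵥ b n) (Sum.inr i))^2) := by
            rw [Finset.mul_sum, Finset.mul_sum, ← Finset.sum_add_distrib]
            exact Finset.sum_le_sum fun i _ => young ξ _ _ _ hξ
              (mul_nonneg (hΛmpos i).le (hPm0 ((J:ℤ)-1) (by omega) (by omega) i))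
          nlinarith [e1, e2]
      _ = (1+ξ) * ((Sum.elim (fun i => W n ((J:ℤ)-1) (Sum.inl i)) (fun i => W n 0 (Sum.inr i))) ⬝ᵥ
              ((Kᵀ * (blkdiag (fun i => Λp i * Pp 0 i) (fun i => Λm i * Pm ((J:ℤ)-1) i)) * K) *ᵥ
                (Sum.elim (fun i => W n ((J:ℤ)-1) (Sum.inl i)) (fun i => W n 0 (Sum.inr i)))))
          + (1+1/ξ) * ((b n) ⬝ᵥ
              ((Mᵀ * (blkdiag (fun i => Λp i * Pp 0 i) (fun i => Λm i * Pm ((J:ℤ)-1) i)) * M) *ᵥ (b n))) := by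
          rw [dot_conj, dot_conj]
      _ ≤ ((Sum.elim (fun i => W n ((J:ℤ)-1) (Sum.inl i)) (fun i => W n 0 (Sum.inr i))) ⬝ᵥ
            ((blkdiag (fun i => Λp i * Pp (J:ℤ) i) (fun i => Λm i * Pm (-1) i)) *ᵥ
              (Sum.elim (fun i => W n ((J:ℤ)-1) (Sum.inl i)) (fun i => W n 0 (Sum.inr i)))))
          + (1+1/ξ) * (ν * ∑ i, (b n i)^2) := by
          have h1 := hbdry (Sum.elim (fun i => W n ((J:ℤ)-1) (Sum.inl i)) (fun i => W n 0 (Sum.inr i)))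
          simp only [Matrix.sub_mulVec, Matrix.smul_mulVec, dotProduct_sub,
            dotProduct_smul, smul_eq_mul] at h1
          have h2 := hnu (b n)
          have h3 : (0:ℝ) ≤ 1 + 1/ξ := by positivity
          nlinarith [mul_le_mul_of_nonneg_left h2 h3]
      _ = ((∑ i, (Λp i * Pp (J:ℤ) i) * (W n ((J:ℤ)-1) (Sum.inl i))^2)
            + ∑ i, (Λm i * Pm (-1) i) * (W n 0 (Sum.inr i))^2)
          + ν * (1 + 1/ξ) * ∑ i, (b n i)^2 := by
          rw [dot_blkdiag]
          simp only [Sum.elim_inl, Sum.elim_inr]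
          ring
  -- final assembly
  calc ∑ j ∈ Finset.Icc (0:ℤ) ((J:ℤ)-1),
        ((∑ i, Pp j i * (W (n+1) j (Sum.inl i))^2) + ∑ i, Pm j i * (W (n+1) j (Sum.inr i))^2)
      ≤ ∑ j ∈ Finset.Icc (0:ℤ) ((J:ℤ)-1),
          ((∑ i, Pp j i * (Wtil n j (Sum.inl i))^2) + ∑ i, Pm j i * (Wtil n j (Sum.inr i))^2) :=
        Finset.sum_le_sum srcA
    _ ≤ (1 - η * Δt) * ∑ j ∈ Finset.Icc (0:ℤ) ((J:ℤ)-1),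
            ((∑ i, Pp j i * (W n j (Sum.inl i))^2) + ∑ i, Pm j i * (W n j (Sum.inr i))^2)
        + ((Δt/Δx) * ∑ i, (Λp i * Pp 0 i) * (W n (-1) (Sum.inl i))^2
          - (Δt/Δx) * ∑ i, (Λp i * Pp (J:ℤ) i) * (W n ((J:ℤ)-1) (Sum.inl i))^2
          + (Δt/Δx) * ∑ i, (Λm i * Pm ((J:ℤ)-1) i) * (W n (J:ℤ) (Sum.inr i))^2
          - (Δt/Δx) * ∑ i, (Λm i * Pm (-1) i) * (W n 0 (Sum.inr i))^2) := interior
    _ ≤ (1 - η * Δt) * ∑ j ∈ Finset.Icc (0:ℤ) ((J:ℤ)-1),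
            ((∑ i, Pp j i * (W n j (Sum.inl i))^2) + ∑ i, Pm j i * (W n j (Sum.inr i))^2)
        + (Δt / Δx) * (ν * (1 + 1/ξ) * ∑ i, (b n i)^2) := by
        apply add_le_add_right
        nlinarith [mul_le_mul_of_nonneg_left bdry_est (le_of_lt (div_pos hΔt hΔx))]

lemma iterate_bound (L B : ℕ → ℝ) (r c : ℝ) (hr0 : 0 ≤ r) (hc : 0 ≤ c) (N : ℕ)
    (hstep : ∀ n, n < N → L (n+1) ≤ r * L n + c * B n) (hB : ∀ n, 0 ≤ B n) :
    ∀ n, n < N → L (n+1) ≤ r^(n+1) * L 0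
      + c * ((Finset.range (n+1)).sup' Finset.nonempty_range_add_one B)
          * ∑ k ∈ Finset.range (n+1), r^k := by
  intro n
  induction n with
  | zero =>
    intro h0
    have h := hstep 0 h0
    have hB0 : B 0 ≤ (Finset.range 1).sup' Finset.nonempty_range_add_one B :=
      Finset.le_sup' B (by simp)
    have e0 : ∑ k ∈ Finset.range (0+1), r^k = 1 := by simp
    have e1 : r^(0+1) = r := by ring
    rw [e0, e1, mul_one]
    nlinarith [mul_le_mul_of_nonneg_left hB0 hc]
  | succ k ih =>
    intro h
    have hk : k < N := by omega
    have h1 := hstep (k+1) h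
    have h2 := ih hk
    have hmono : (Finset.range (k+1)).sup' Finset.nonempty_range_add_one B
        ≤ (Finset.range (k+2)).sup' Finset.nonempty_range_add_one B :=
      Finset.sup'_mono B (Finset.range_subset_range.2 (by omega)) Finset.nonempty_range_add_one
    have hBle : B (k+1) ≤ (Finset.range (k+2)).sup' Finset.nonempty_range_add_one B :=
      Finset.le_sup' B (by simp)
    have hsum0 : 0 ≤ ∑ i ∈ Finset.range (k+1), r^i :=
      Finset.sum_nonneg fun i _ => pow_nonneg hr0 i
    have hgs : ∑ i ∈ Finset.range (k+2), r^i = r * ∑ i ∈ Finset.range (k+1), r^i + 1 :=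
      geom_sum_succ
    calc L (k+2) ≤ r * L (k+1) + c * B (k+1) := h1
      _ ≤ r * (r^(k+1) * L 0
            + c * ((Finset.range (k+1)).sup' Finset.nonempty_range_add_one B)
                * ∑ i ∈ Finset.range (k+1), r^i) + c * B (k+1) := by
          have := mul_le_mul_of_nonneg_left h2 hr0
          linarith
      _ = r^(k+2) * L 0
            + c * ((Finset.range (k+1)).sup' Finset.nonempty_range_add_one B)
                * (r * ∑ i ∈ Finset.range (k+1), r^i) + c * B (k+1) := by ring
      _ ≤ r^(k+2) * L 0
            + c * ((Finset.range (k+2)).sup' Finset.nonempty_range_add_one B)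
                * (r * ∑ i ∈ Finset.range (k+1), r^i)
            + c * ((Finset.range (k+2)).sup' Finset.nonempty_range_add_one B) := by
          have e1 : c * ((Finset.range (k+1)).sup' Finset.nonempty_range_add_one B)
              * (r * ∑ i ∈ Finset.range (k+1), r^i)
              ≤ c * ((Finset.range (k+2)).sup' Finset.nonempty_range_add_one B)
              * (r * ∑ i ∈ Finset.range (k+1), r^i) := by
            apply mul_le_mul_of_nonneg_right _ (mul_nonneg hr0 hsum0)
            exact mul_le_mul_of_nonneg_left hmono hc
          have e2 : c * B (k+1) ≤
              c * ((Finset.range (k+2)).sup' Finset.nonempty_range_add_one B) :=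
            mul_le_mul_of_nonneg_left hBle hc
          linarith
      _ = r^(k+2) * L 0
            + c * ((Finset.range (k+2)).sup' Finset.nonempty_range_add_one B)
                * ∑ i ∈ Finset.range (k+2), r^i := by
          rw [hgs]; ring

set_option maxHeartbeats 1000000 in
theorem discrete_iss_in_L2_norm_uniform (m km J N : ℕ)
    (hm : 0 < m) (hkm : 0 < km) (hJ : 0 < J) (hN : 0 < N)
    (Δx Δt ξ η ν ζ β : ℝ) (hΔx : 0 < Δx) (hΔt : 0 < Δt) (hξ : 0 < ξ)
    (hη : 0 < η) (hν : 0 < ν) (hζ : 0 < ζ) (hζβ : ζ ≤ β)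
    (hηΔt0 : 0 < 1 - η * Δt) (hηΔt1 : 1 - η * Δt < 1)
    (Λp : Fin m → ℝ) (Λm : Fin km → ℝ)
    (Pp : ℤ → Fin m → ℝ) (Pm : ℤ → Fin km → ℝ)
    (Pim : Matrix (Fin m ⊕ Fin km) (Fin m ⊕ Fin km) ℝ)
    (K M : Matrix (Fin m ⊕ Fin km) (Fin m ⊕ Fin km) ℝ) (hM : M.IsDiag)
    (b : ℕ → Fin m ⊕ Fin km → ℝ) (hb0 : b 0 = 0)
    (hΛppos : ∀ i, 0 < Λp i) (hΛmpos : ∀ i, 0 < Λm i)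
    (hPpbound : ∀ j : ℤ, -1 ≤ j → j ≤ (J : ℤ) → ∀ i, Pp j i ∈ Set.Icc ζ β)
    (hPmbound : ∀ j : ℤ, -1 ≤ j → j ≤ (J : ℤ) → ∀ i, Pm j i ∈ Set.Icc ζ β)
    -- the upwind split scheme
    (W Wtil : ℕ → ℤ → Fin m ⊕ Fin km → ℝ)
    (hplus : ∀ n : ℕ, n < N → ∀ j : ℤ, 0 ≤ j → j < (J : ℤ) → ∀ i : Fin m,
      Wtil n j (Sum.inl i) = W n j (Sum.inl i)
        - (Δt / Δx) * Λp i * (W n j (Sum.inl i) - W n (j - 1) (Sum.inl i)))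
    (hminus : ∀ n : ℕ, n < N → ∀ j : ℤ, 0 ≤ j → j < (J : ℤ) → ∀ i : Fin km,
      Wtil n j (Sum.inr i) = W n j (Sum.inr i)
        + (Δt / Δx) * Λm i * (W n (j + 1) (Sum.inr i) - W n j (Sum.inr i)))
    (hstep : ∀ n : ℕ, n < N → ∀ j : ℤ, 0 ≤ j → j < (J : ℤ) →
      W (n + 1) j = Wtil n j - Δt • (Pim *ᵥ Wtil n j))
    -- discrete boundary conditions with disturbance
    (hBC : ∀ n : ℕ, n ≤ N →
      Sum.elim (fun i => W n (-1) (Sum.inl i)) (fun i => W n (J : ℤ) (Sum.inr i)) =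
        K *ᵥ Sum.elim (fun i => W n ((J : ℤ) - 1) (Sum.inl i))
            (fun i => W n 0 (Sum.inr i)) + M *ᵥ b n)
    -- CFL condition
    (hCFL : (∀ i, (Δt / Δx) * Λp i ≤ 1) ∧ (∀ i, (Δt / Δx) * Λm i ≤ 1))
    -- (i) discrete interior dissipativity
    (hdiss : ∀ j : ℤ, 0 ≤ j → j < (J : ℤ) → ∀ v : Fin m ⊕ Fin km → ℝ,
      η * (v ⬝ᵥ (blkdiag (Pp j) (Pm j) *ᵥ v)) ≤
        v ⬝ᵥ (((1 / Δx) • blkdiag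
          (fun i => -Λp i * (Pp (j + 1) i - Pp j i))
          (fun i => Λm i * (Pm j i - Pm (j - 1) i))) *ᵥ v))
    -- (ii) source matrix positive semi-definite
    (hsrc : ∀ j : ℤ, 0 ≤ j → j < (J : ℤ) → ∀ v : Fin m ⊕ Fin km → ℝ,
      0 ≤ v ⬝ᵥ ((blkdiag (Pp j) (Pm j) * Pim + Pimᵀ * blkdiag (Pp j) (Pm j)
          - Δt • (Pimᵀ * blkdiag (Pp j) (Pm j) * Pim)) *ᵥ v))
    -- (iii) boundary matrix positive semi-definite
    (hbdry : ∀ v : Fin m ⊕ Fin km → ℝ,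
      0 ≤ v ⬝ᵥ ((blkdiag (fun i => Λp i * Pp (J : ℤ) i)
            (fun i => Λm i * Pm (-1) i)
          - (1 + ξ) • (Kᵀ * blkdiag (fun i => Λp i * Pp 0 i)
              (fun i => Λm i * Pm ((J : ℤ) - 1) i) * K)) *ᵥ v))
    -- (iv) bound on the disturbance matrix
    (hnu : ∀ c : Fin m ⊕ Fin km → ℝ,
      c ⬝ᵥ ((Mᵀ * blkdiag (fun i => Λp i * Pp 0 i)
          (fun i => Λm i * Pm ((J : ℤ) - 1) i) * M) *ᵥ c) ≤
        ν * ∑ i, (c i) ^ 2) :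
    ∀ n : ℕ, n < N →
      Δx * ∑ j ∈ Finset.Icc (0 : ℤ) ((J : ℤ) - 1), ∑ i, (W (n + 1) j i) ^ 2 ≤
        (β / ζ) * Real.exp (-η * ((n + 1) * Δt)) *
            (Δx * ∑ j ∈ Finset.Icc (0 : ℤ) ((J : ℤ) - 1), ∑ i, (W 0 j i) ^ 2)
          + (ν / (ζ * η)) * (1 + 1 / ξ) *
              (Finset.range (n + 1)).sup' Finset.nonempty_range_add_one
                (fun s => ∑ i, (b s i) ^ 2) := by
  intro n hnN
  -- the per-step estimate in the form needed by `iterate_bound`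
  have hstep' : ∀ s, s < N →
      (∑ j ∈ Finset.Icc (0:ℤ) ((J:ℤ)-1),
          ((∑ i, Pp j i * (W (s+1) j (Sum.inl i))^2) + ∑ i, Pm j i * (W (s+1) j (Sum.inr i))^2))
        ≤ (1 - η * Δt) * (∑ j ∈ Finset.Icc (0:ℤ) ((J:ℤ)-1),
            ((∑ i, Pp j i * (W s j (Sum.inl i))^2) + ∑ i, Pm j i * (W s j (Sum.inr i))^2))
          + ((Δt/Δx) * (ν * (1 + 1/ξ))) * (∑ i, (b s i)^2) := by
    intro s hs
    have h := step_lemma m km J N Δx Δt ξ η ν ζ hΔx hΔt hξ hζ Λp Λm Pp Pm Pim K M b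
      hΛppos hΛmpos (fun j h1 h2 i => (hPpbound j h1 h2 i).1)
      (fun j h1 h2 i => (hPmbound j h1 h2 i).1) W Wtil hplus hminus hstep hBC hCFL
      hdiss hsrc hbdry hnu s hs
    have e : ((Δt/Δx) * (ν * (1 + 1/ξ))) * (∑ i, (b s i)^2)
        = (Δt/Δx) * (ν * (1 + 1/ξ) * ∑ i, (b s i)^2) := by ring
    rw [e]
    exact h
  have key :
      (∑ j ∈ Finset.Icc (0:ℤ) ((J:ℤ)-1),
          ((∑ i, Pp j i * (W (n+1) j (Sum.inl i))^2) + ∑ i, Pm j i * (W (n+1) j (Sum.inr i))^2))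
        ≤ (1 - η * Δt)^(n+1) * (∑ j ∈ Finset.Icc (0:ℤ) ((J:ℤ)-1),
            ((∑ i, Pp j i * (W 0 j (Sum.inl i))^2) + ∑ i, Pm j i * (W 0 j (Sum.inr i))^2))
          + ((Δt/Δx) * (ν * (1 + 1/ξ)))
              * ((Finset.range (n+1)).sup' Finset.nonempty_range_add_one
                  (fun s => ∑ i, (b s i)^2))
              * ∑ k ∈ Finset.range (n+1), (1 - η * Δt)^k :=
    iterate_bound
      (fun s => ∑ j ∈ Finset.Icc (0:ℤ) ((J:ℤ)-1),
          ((∑ i, Pp j i * (W s j (Sum.inl i))^2) + ∑ i, Pm j i * (W s j (Sum.inr i))^2))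
      (fun s => ∑ i, (b s i)^2) (1 - η * Δt) ((Δt/Δx) * (ν * (1 + 1/ξ)))
      hηΔt0.le (by positivity) N hstep' (fun s => by positivity) n hnN
  -- comparison with the plain L² norms
  have hzeta : ζ * (∑ j ∈ Finset.Icc (0:ℤ) ((J:ℤ)-1), ∑ i, (W (n+1) j i)^2)
      ≤ ∑ j ∈ Finset.Icc (0:ℤ) ((J:ℤ)-1),
          ((∑ i, Pp j i * (W (n+1) j (Sum.inl i))^2) + ∑ i, Pm j i * (W (n+1) j (Sum.inr i))^2) := by
    rw [Finset.mul_sum]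
    apply Finset.sum_le_sum
    intro j hj
    rw [Finset.mem_Icc] at hj
    rw [Fintype.sum_sum_type, mul_add]
    apply add_le_add
    · rw [Finset.mul_sum]
      exact Finset.sum_le_sum fun i _ =>
        mul_le_mul_of_nonneg_right (hPpbound j (by omega) (by omega) i).1 (sq_nonneg _)
    · rw [Finset.mul_sum]
      exact Finset.sum_le_sum fun i _ =>
        mul_le_mul_of_nonneg_right (hPmbound j (by omega) (by omega) i).1 (sq_nonneg _)
  have hbeta : (∑ j ∈ Finset.Icc (0:ℤ) ((J:ℤ)-1),
        ((∑ i, Pp j i * (W 0 j (Sum.inl i))^2) + ∑ i, Pm j i * (W 0 j (Sum.inr i))^2))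
      ≤ β * (∑ j ∈ Finset.Icc (0:ℤ) ((J:ℤ)-1), ∑ i, (W 0 j i)^2) := by
    rw [Finset.mul_sum]
    apply Finset.sum_le_sum
    intro j hj
    rw [Finset.mem_Icc] at hj
    rw [Fintype.sum_sum_type, mul_add]
    apply add_le_add
    · rw [Finset.mul_sum]
      exact Finset.sum_le_sum fun i _ =>
        mul_le_mul_of_nonneg_right (hPpbound j (by omega) (by omega) i).2 (sq_nonneg _)
    · rw [Finset.mul_sum]
      exact Finset.sum_le_sum fun i _ =>
        mul_le_mul_of_nonneg_right (hPmbound j (by omega) (by omega) i).2 (sq_nonneg _)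
  -- the geometric sum bound
  have hgeom : ∑ k ∈ Finset.range (n+1), (1 - η * Δt)^k ≤ 1 / (η * Δt) := by
    have hpos : (0:ℝ) < η * Δt := by positivity
    rw [le_div_iff₀ hpos]
    nlinarith [geom_sum_mul (1 - η * Δt) (n+1), pow_nonneg hηΔt0.le (n+1)]
  -- the exponential bound
  have hexp : (1 - η * Δt)^(n+1) ≤ Real.exp (-η * (((n:ℝ)+1) * Δt)) := by
    have h1 : 1 - η * Δt ≤ Real.exp (-(η * Δt)) := by
      nlinarith [Real.add_one_le_exp (-(η * Δt))]
    calc (1 - η * Δt)^(n+1) ≤ (Real.exp (-(η * Δt)))^(n+1) :=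
          pow_le_pow_left₀ hηΔt0.le h1 _
      _ = Real.exp (-η * (((n:ℝ)+1) * Δt)) := by
          rw [← Real.exp_nat_mul]
          congr 1
          push_cast
          ring
  -- nonnegativity facts
  have hMx0 : 0 ≤ (Finset.range (n+1)).sup' Finset.nonempty_range_add_one
      (fun s => ∑ i, (b s i)^2) :=
    le_trans (by positivity : (0:ℝ) ≤ ∑ i, (b 0 i)^2)
      (Finset.le_sup' (fun s => ∑ i, (b s i)^2) (by simp))
  have hE0 : (0:ℝ) ≤ ∑ j ∈ Finset.Icc (0:ℤ) ((J:ℤ)-1), ∑ i, (W 0 j i)^2 := by positivity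
  have hc0 : (0:ℝ) ≤ (Δt/Δx) * (ν * (1 + 1/ξ)) := by positivity
  -- assemble
  have main : ζ * (∑ j ∈ Finset.Icc (0:ℤ) ((J:ℤ)-1), ∑ i, (W (n+1) j i)^2)
      ≤ (1 - η * Δt)^(n+1) * (β * ∑ j ∈ Finset.Icc (0:ℤ) ((J:ℤ)-1), ∑ i, (W 0 j i)^2)
        + ((Δt/Δx) * (ν * (1 + 1/ξ)))
            * ((Finset.range (n+1)).sup' Finset.nonempty_range_add_one
                (fun s => ∑ i, (b s i)^2)) * (1 / (η * Δt)) := by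
    have t1 := mul_le_mul_of_nonneg_left hbeta (pow_nonneg hηΔt0.le (n+1))
    have t2 := mul_le_mul_of_nonneg_left hgeom (mul_nonneg hc0 hMx0)
    linarith [key, t1, t2]
  have hfin2 : (Δx/ζ) * ((1 - η * Δt)^(n+1)
        * (β * ∑ j ∈ Finset.Icc (0:ℤ) ((J:ℤ)-1), ∑ i, (W 0 j i)^2)
      + ((Δt/Δx) * (ν * (1 + 1/ξ)))
          * ((Finset.range (n+1)).sup' Finset.nonempty_range_add_one
              (fun s => ∑ i, (b s i)^2)) * (1 / (η * Δt)))
      = (β/ζ) * (1 - η * Δt)^(n+1)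
          * (Δx * ∑ j ∈ Finset.Icc (0:ℤ) ((J:ℤ)-1), ∑ i, (W 0 j i)^2)
        + (ν / (ζ * η)) * (1 + 1/ξ)
            * ((Finset.range (n+1)).sup' Finset.nonempty_range_add_one
                (fun s => ∑ i, (b s i)^2)) := by
    field_simp
  have hfin1 : Δx * (∑ j ∈ Finset.Icc (0:ℤ) ((J:ℤ)-1), ∑ i, (W (n+1) j i)^2)
      ≤ (Δx/ζ) * ((1 - η * Δt)^(n+1)
          * (β * ∑ j ∈ Finset.Icc (0:ℤ) ((J:ℤ)-1), ∑ i, (W 0 j i)^2)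
        + ((Δt/Δx) * (ν * (1 + 1/ξ)))
            * ((Finset.range (n+1)).sup' Finset.nonempty_range_add_one
                (fun s => ∑ i, (b s i)^2)) * (1 / (η * Δt))) := by
    have hE1X : (∑ j ∈ Finset.Icc (0:ℤ) ((J:ℤ)-1), ∑ i, (W (n+1) j i)^2)
        ≤ ((1 - η * Δt)^(n+1)
            * (β * ∑ j ∈ Finset.Icc (0:ℤ) ((J:ℤ)-1), ∑ i, (W 0 j i)^2)
          + ((Δt/Δx) * (ν * (1 + 1/ξ)))
              * ((Finset.range (n+1)).sup' Finset.nonempty_range_add_one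
                  (fun s => ∑ i, (b s i)^2)) * (1 / (η * Δt))) / ζ := by
      rw [le_div_iff₀ hζ]
      linarith [main]
    calc Δx * (∑ j ∈ Finset.Icc (0:ℤ) ((J:ℤ)-1), ∑ i, (W (n+1) j i)^2)
        ≤ Δx * (((1 - η * Δt)^(n+1)
            * (β * ∑ j ∈ Finset.Icc (0:ℤ) ((J:ℤ)-1), ∑ i, (W 0 j i)^2)
          + ((Δt/Δx) * (ν * (1 + 1/ξ)))
              * ((Finset.range (n+1)).sup' Finset.nonempty_range_add_one
                  (fun s => ∑ i, (b s i)^2)) * (1 / (η * Δt))) / ζ) :=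
          mul_le_mul_of_nonneg_left hE1X hΔx.le
      _ = (Δx/ζ) * ((1 - η * Δt)^(n+1)
            * (β * ∑ j ∈ Finset.Icc (0:ℤ) ((J:ℤ)-1), ∑ i, (W 0 j i)^2)
          + ((Δt/Δx) * (ν * (1 + 1/ξ)))
              * ((Finset.range (n+1)).sup' Finset.nonempty_range_add_one
                  (fun s => ∑ i, (b s i)^2)) * (1 / (η * Δt))) := by ring
  have hfin3 : (β/ζ) * (1 - η * Δt)^(n+1)
        * (Δx * ∑ j ∈ Finset.Icc (0:ℤ) ((J:ℤ)-1), ∑ i, (W 0 j i)^2)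
      ≤ (β/ζ) * Real.exp (-η * (((n:ℝ)+1) * Δt))
        * (Δx * ∑ j ∈ Finset.Icc (0:ℤ) ((J:ℤ)-1), ∑ i, (W 0 j i)^2) := by
    apply mul_le_mul_of_nonneg_right _ (by positivity)
    exact mul_le_mul_of_nonneg_left hexp (div_nonneg (by linarith) hζ.le)
  calc Δx * ∑ j ∈ Finset.Icc (0 : ℤ) ((J : ℤ) - 1), ∑ i, (W (n + 1) j i) ^ 2
      ≤ (Δx/ζ) * ((1 - η * Δt)^(n+1)
          * (β * ∑ j ∈ Finset.Icc (0:ℤ) ((J:ℤ)-1), ∑ i, (W 0 j i)^2)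
        + ((Δt/Δx) * (ν * (1 + 1/ξ)))
            * ((Finset.range (n+1)).sup' Finset.nonempty_range_add_one
                (fun s => ∑ i, (b s i)^2)) * (1 / (η * Δt))) := hfin1
    _ = (β/ζ) * (1 - η * Δt)^(n+1)
          * (Δx * ∑ j ∈ Finset.Icc (0:ℤ) ((J:ℤ)-1), ∑ i, (W 0 j i)^2)
        + (ν / (ζ * η)) * (1 + 1/ξ)
            * ((Finset.range (n+1)).sup' Finset.nonempty_range_add_one
                (fun s => ∑ i, (b s i)^2)) := hfin2
    _ ≤ (β / ζ) * Real.exp (-η * ((n + 1) * Δt)) *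
            (Δx * ∑ j ∈ Finset.Icc (0 : ℤ) ((J : ℤ) - 1), ∑ i, (W 0 j i) ^ 2)
          + (ν / (ζ * η)) * (1 + 1 / ξ) *
              (Finset.range (n + 1)).sup' Finset.nonempty_range_add_one
                (fun s => ∑ i, (b s i) ^ 2) := by
        exact add_le_add_left hfin3 _
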